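/- arXiv:2403.01830 — 4 statements merged into one kernel-verified Lean document; each statement's English description precedes it below -/
import Mathlib

section
/- For every integer n ≥ 1 and every ξ ∈ ℝ^n, the LogSumExp obstacle function converges as the smoothing parameter tends to zero from above: lim_{α → 0⁺} o^lse(ξ; α) = ‖ξ‖_2² / n, where ‖ξ‖_2 is the Euclidean norm. In particular, the sublevel sets O^lse(α) converge to the Euclidean ball {ξ : ‖ξ‖_2 ≤ √n} = O^p(2) as α → 0⁺. -/
/-!
Since `cosh t - 1 = 2 sinh² (t / 2)` and `sinh x / x → 1`, we have `cosh (α c) - 1 ~ c² α² / 2`;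
together with `log u ~ u - 1` as `u → 1` this gives `log (mean_i cosh (α ξ_i)) ~ ‖ξ‖₂² α² / (2n)`
and `log (cosh α) ~ α² / 2`, whose quotient tends to `‖ξ‖₂² / n`.
-/

/-- Normalization constant `η_lse(α) = 1 / log((1/2)(exp α + exp (−α)))`. -/
noncomputable def etaLse (α : ℝ) : ℝ :=
  1 / Real.log ((1 / 2) * (Real.exp α + Real.exp (-α)))

/-- The LogSumExp obstacle function
`o^lse(ξ; α) = η_lse(α) * log((1/(2n)) ∑ i, (exp (α ξ_i) + exp (−α ξ_i)))`. -/
noncomputable def oLse (n : ℕ) (α : ℝ) (ξ : Fin n → ℝ) : ℝ :=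
  etaLse α * Real.log ((1 / (2 * (n : ℝ))) * ∑ i, (Real.exp (α * ξ i) + Real.exp (-(α * ξ i))))

open Real Filter Set Topology

theorem tendsto_cosh_mul_sub_one_div_sq (c : ℝ) :
    Tendsto (fun α : ℝ => (cosh (α * c) - 1) / α ^ 2) (𝓝[≠] 0) (𝓝 (c ^ 2 / 2)) := by
  -- `dslope sinh 0` is `sinh x / x` extended by `1` at `0`, so `sinh x = x * φ x` holds everywhere.
  set φ := dslope sinh 0
  have hφ : ContinuousAt φ 0 := continuousAt_dslope_same.2 differentiableAt_sinh
  have hφ0 : φ 0 = 1 := by simp [φ, dslope_same]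
  have hsinh (x : ℝ) : sinh x = x * φ x := by simpa using (sub_smul_dslope sinh 0 x).symm
  have hlim : Tendsto (fun α : ℝ => c ^ 2 / 2 * φ (α * c / 2) ^ 2) (𝓝 0) (𝓝 (c ^ 2 / 2)) := by
    have hscale : Tendsto (fun α : ℝ => α * c / 2) (𝓝 0) (𝓝 0) := by
      simpa using ((continuous_mul_const c).div_const 2).tendsto 0
    simpa [hφ0] using ((hφ.tendsto.comp hscale).pow 2).const_mul (c ^ 2 / 2)
  refine (hlim.mono_left nhdsWithin_le_nhds).congr' ?_
  filter_upwards [self_mem_nhdsWithin] with α (hα : α ≠ 0)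
  have hhalf : cosh (α * c) = 1 + 2 * sinh (α * c / 2) ^ 2 := by
    have h := cosh_two_mul (α * c / 2)
    rw [cosh_sq', show 2 * (α * c / 2) = α * c by ring] at h
    rw [h]; ring
  rw [hhalf, hsinh]
  field_simp
  ring

theorem Filter.Tendsto.log_div_of_sub_one_div {ι : Type*} {l : Filter ι} {u v : ι → ℝ} {L : ℝ}
    (hu : Tendsto u l (𝓝 1)) (huv : Tendsto (fun i => (u i - 1) / v i) l (𝓝 L)) :
    Tendsto (fun i => Real.log (u i) / v i) l (𝓝 L) := by
  set φ := dslope Real.log 1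
  have hφ : ContinuousAt φ 1 := continuousAt_dslope_same.2 (differentiableAt_log one_ne_zero)
  have hφ1 : φ 1 = 1 := by simp [φ, dslope_same]
  have hlog (x : ℝ) : Real.log x = (x - 1) * φ x := by
    simpa using (sub_smul_dslope Real.log 1 x).symm
  have hlim := (hφ.tendsto.comp hu).mul huv
  rw [hφ1, one_mul] at hlim
  refine hlim.congr fun i => ?_
  simp only [Function.comp_apply, hlog (u i)]
  ring

theorem oLse_eq_log_mean_cosh_div_log_cosh (n : ℕ) (α : ℝ) (ξ : Fin n → ℝ) :
    oLse n α ξ = log ((∑ i, cosh (α * ξ i)) / n) / log (cosh α) := by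
  simp only [oLse, etaLse, cosh_eq, ← Finset.sum_div]
  rw [div_div, one_div_mul_eq_div, one_div_mul_eq_div, one_div_mul_eq_div, mul_comm (2 : ℝ)]

/-- For every `n ≥ 1` and `ξ ∈ ℝ^n`, the LogSumExp obstacle function converges as
the smoothing parameter tends to zero from above:
`lim_{α → 0⁺} o^lse(ξ; α) = ‖ξ‖₂² / n`. -/
theorem oLse_tendsto_zero (n : ℕ) (hn : 1 ≤ n) (ξ : Fin n → ℝ) :
    Filter.Tendsto (fun α : ℝ => oLse n α ξ) (nhdsWithin 0 (Set.Ioi 0))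
      (nhds ((∑ i, (ξ i) ^ 2) / (n : ℝ))) := by
  have hn0 : (n : ℝ) ≠ 0 := Nat.cast_ne_zero.2 (by omega)
  set M : ℝ → ℝ := fun α => (∑ i, cosh (α * ξ i)) / n
  have hM : Tendsto M (𝓝[≠] 0) (𝓝 1) := by
    have hM0 : M 0 = 1 := by simp [M, hn0]
    exact hM0 ▸ (by fun_prop : Continuous M).continuousAt.tendsto.mono_left nhdsWithin_le_nhds
  have hM' : Tendsto (fun α => (M α - 1) / α ^ 2) (𝓝[≠] 0) (𝓝 ((∑ i, ξ i ^ 2 / 2) / (n : ℝ))) := by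
    refine ((tendsto_finsetSum _ fun i _ => tendsto_cosh_mul_sub_one_div_sq (ξ i)).div_const
      (n : ℝ)).congr fun α => ?_
    simp only [M, ← Finset.sum_div, Finset.sum_sub_distrib, Finset.sum_const, Finset.card_univ,
      Fintype.card_fin, nsmul_eq_mul, mul_one]
    field_simp
  have hcosh : Tendsto (fun α => log (cosh α) / α ^ 2) (𝓝[≠] 0) (𝓝 (1 / 2)) :=
    (continuous_cosh.tendsto' 0 1 cosh_zero).mono_left nhdsWithin_le_nhds
      |>.log_div_of_sub_one_div (by simpa using tendsto_cosh_mul_sub_one_div_sq 1)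
  have hquot := ((hM.log_div_of_sub_one_div hM').div hcosh (by norm_num)).mono_left
    (nhdsGT_le_nhdsNE 0)
  rw [show (∑ i, ξ i ^ 2 / 2) / n / (1 / 2) = (∑ i, ξ i ^ 2) / (n : ℝ) by
    rw [← Finset.sum_div]; field_simp] at hquot
  refine hquot.congr' ?_
  filter_upwards [self_mem_nhdsWithin] with α (hα : 0 < α)
  rw [Pi.div_apply, div_div_div_cancel_right₀ (by positivity), oLse_eq_log_mean_cosh_div_log_cosh]
end

section
/- For every integer n ≥ 1 and every ξ ∈ ℝ^n, the LogSumExp obstacle function converges to the supremum norm as the smoothing parameter tends to infinity: lim_{α → ∞} o^lse(ξ; α) = ‖ξ‖_∞ = max_i |ξ_i|. In particular, the sublevel sets O^lse(α) recover the unit hypercube in the limit α → ∞. -/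
/-! Write `M = maxᵢ |ξᵢ|`. Since `(1/2) e^{|x|} ≤ cosh x ≤ e^{|x|}`, we have
`log (cosh x) = |x| + O(1)`. The numerator of `o^lse` is `log ((1/n) ∑ᵢ cosh (α ξᵢ))`, which lies
between `log (cosh (α M)) - log n` and `log (cosh (α M))`, hence equals `M α + O(1)`; the
denominator `log (cosh α)` is `α + O(1)`, so their ratio tends to `M`. -/

open Real Filter Topology Asymptotics Finset

theorem tendsto_div_self_of_isBigO_sub {f : ℝ → ℝ} {a : ℝ}
    (hf : (fun x => f x - a * x) =O[atTop] (fun _ => (1 : ℝ))) :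
    Tendsto (fun x => f x / x) atTop (𝓝 a) := by
  have hlim := (hf.trans_isLittleO (isLittleO_const_id_atTop (1 : ℝ))).tendsto_div_nhds_zero
  refine (zero_add a ▸ hlim.add_const a).congr' ?_
  filter_upwards [eventually_ne_atTop 0] with x hx
  simp only [id, sub_div, mul_div_cancel_right₀ a hx, sub_add_cancel]

theorem tendsto_div_of_isBigO_sub {f g : ℝ → ℝ} {a : ℝ}
    (hf : (fun x => f x - a * x) =O[atTop] (fun _ => (1 : ℝ)))
    (hg : (fun x => g x - x) =O[atTop] (fun _ => (1 : ℝ))) :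
    Tendsto (fun x => f x / g x) atTop (𝓝 a) := by
  have hg' : Tendsto (fun x => g x / x) atTop (𝓝 1) :=
    tendsto_div_self_of_isBigO_sub (by simpa using hg)
  have hlim := (tendsto_div_self_of_isBigO_sub hf).div hg' one_ne_zero
  rw [div_one] at hlim
  refine hlim.congr' ?_
  filter_upwards [eventually_ne_atTop 0] with x hx
  exact div_div_div_cancel_right₀ hx _ _

theorem abs_log_cosh_sub_abs_le (x : ℝ) : |log (cosh x) - (|x|)| ≤ log 2 := by
  have hupper : cosh x ≤ exp |x| := by
    rw [← cosh_abs, cosh_eq]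
    linarith [exp_le_exp.2 (neg_le_self (abs_nonneg x))]
  have hlower : exp |x| ≤ 2 * cosh x := by
    rw [cosh_eq]
    linarith [exp_abs_le x]
  have hlog_lower : |x| ≤ log 2 + log (cosh x) := by
    rw [← log_mul two_ne_zero (cosh_pos x).ne', ← log_exp |x|]
    exact log_le_log (exp_pos _) hlower
  have hlog_upper : log (cosh x) ≤ |x| := (log_le_iff_le_exp (cosh_pos x)).2 hupper
  rw [abs_sub_le_iff]
  constructor <;> linarith [log_nonneg one_le_two]

theorem isBigO_log_cosh_sub_self :
    (fun x => log (cosh x) - x) =O[atTop] (fun _ => (1 : ℝ)) := by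
  refine IsBigO.of_bound (log 2) ?_
  filter_upwards [eventually_ge_atTop 0] with x hx
  simpa [abs_of_nonneg hx] using abs_log_cosh_sub_abs_le x

section CoshSum

variable {ι : Type*} {s : Finset ι} (hs : s.Nonempty) (ξ : ι → ℝ) {α : ℝ}

theorem cosh_mul_sup'_abs_le_sum_cosh :
    cosh (α * s.sup' hs (|ξ ·|)) ≤ ∑ i ∈ s, cosh (α * ξ i) := by
  obtain ⟨i, hi, hmax⟩ := exists_mem_eq_sup' hs (|ξ ·|)
  have hcosh : cosh (α * |ξ i|) = cosh (α * ξ i) := by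
    rw [← cosh_abs, abs_mul, abs_abs, ← abs_mul, cosh_abs]
  rw [hmax, hcosh]
  exact single_le_sum (f := fun j => cosh (α * ξ j)) (fun j _ => (cosh_pos _).le) hi

theorem sum_cosh_le_card_mul_cosh_mul_sup'_abs (hα : 0 ≤ α) :
    ∑ i ∈ s, cosh (α * ξ i) ≤ #s * cosh (α * s.sup' hs (|ξ ·|)) := by
  rw [← nsmul_eq_mul]
  refine sum_le_card_nsmul _ _ _ fun i hi => ?_
  have hle : |ξ i| ≤ s.sup' hs (|ξ ·|) := le_sup' (|ξ ·|) hi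
  rw [cosh_le_cosh, abs_mul, abs_mul, abs_of_nonneg hα, abs_of_nonneg ((abs_nonneg _).trans hle)]
  exact mul_le_mul_of_nonneg_left hle hα

theorem abs_log_sum_cosh_sub_le (hα : 0 ≤ α) :
    |log (∑ i ∈ s, cosh (α * ξ i)) - α * s.sup' hs (|ξ ·|)| ≤ log #s + log 2 := by
  set M := s.sup' hs (|ξ ·|)
  have hM : 0 ≤ M := (abs_nonneg _).trans (le_sup' (|ξ ·|) hs.choose_spec)
  have hcosh_pos : 0 < cosh (α * M) := cosh_pos _
  have hcard : (0 : ℝ) < #s := by exact_mod_cast hs.card_pos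
  have hlower := log_le_log hcosh_pos (cosh_mul_sup'_abs_le_sum_cosh hs ξ)
  have hupper := log_le_log (hcosh_pos.trans_le (cosh_mul_sup'_abs_le_sum_cosh hs ξ))
    (sum_cosh_le_card_mul_cosh_mul_sup'_abs hs ξ hα)
  rw [log_mul hcard.ne' hcosh_pos.ne'] at hupper
  have hcosh := abs_log_cosh_sub_abs_le (α * M)
  rw [abs_of_nonneg (mul_nonneg hα hM), abs_sub_le_iff] at hcosh
  rw [abs_sub_le_iff]
  constructor <;> linarith [log_nonneg (one_le_two : (1 : ℝ) ≤ 2),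
    log_nonneg (by exact_mod_cast hs.card_pos : (1 : ℝ) ≤ #s)]

theorem isBigO_log_sum_cosh_sub :
    (fun α => log (∑ i ∈ s, cosh (α * ξ i)) - s.sup' hs (|ξ ·|) * α) =O[atTop]
      (fun _ => (1 : ℝ)) := by
  refine IsBigO.of_bound (log #s + log 2) ?_
  filter_upwards [eventually_ge_atTop 0] with α hα
  simpa [mul_comm] using abs_log_sum_cosh_sub_le hs ξ hα

end CoshSum

theorem oLse_eq (n : ℕ) (α : ℝ) (ξ : Fin n → ℝ) :
    oLse n α ξ = (log (∑ i, cosh (α * ξ i)) - log n) / log (cosh α) := by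
  have hsum : ∑ i, (exp (α * ξ i) + exp (-(α * ξ i))) = 2 * ∑ i, cosh (α * ξ i) := by
    rw [mul_sum]
    exact sum_congr rfl fun i _ => by rw [cosh_eq]; ring
  rcases eq_or_ne n 0 with rfl | hn
  · simp [oLse]
  have hpos : 0 < ∑ i, cosh (α * ξ i) :=
    sum_pos (fun i _ => cosh_pos _) (univ_nonempty_iff.2 ⟨⟨0, Nat.pos_of_ne_zero hn⟩⟩)
  rw [oLse, etaLse, hsum, cosh_eq, ← log_div hpos.ne' (by exact_mod_cast hn)]
  field_simp

/-- For every `n ≥ 1` and `ξ ∈ ℝ^n`, the LogSumExp obstacle function converges to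
the supremum norm as the smoothing parameter tends to infinity:
`lim_{α → ∞} o^lse(ξ; α) = ‖ξ‖_∞ = max_i |ξ_i|`. -/
theorem oLse_tendsto_supNorm (n : ℕ) (hn : 1 ≤ n) (ξ : Fin n → ℝ) :
    Filter.Tendsto (fun α : ℝ => oLse n α ξ) Filter.atTop
      (nhds (Finset.univ.sup' ⟨⟨0, hn⟩, Finset.mem_univ _⟩ (fun i => |ξ i|))) := by
  have hs : (univ : Finset (Fin n)).Nonempty := ⟨⟨0, hn⟩, mem_univ _⟩
  have hnum : (fun α => (log (∑ i, cosh (α * ξ i)) - log n) - univ.sup' hs (|ξ ·|) * α)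
      =O[atTop] (fun _ => (1 : ℝ)) :=
    ((isBigO_log_sum_cosh_sub hs ξ).sub (isBigO_const_const _ one_ne_zero _)).congr_left
      fun α => sub_right_comm _ _ _
  simpa only [oLse_eq] using tendsto_div_of_isBigO_sub hnum isBigO_log_cosh_sub_self
end

section
/- For every integer n ≥ 1, every real α > 0, and every ξ ∈ ℝ^n with ‖ξ‖_∞ ≤ 1, one has o^bm(ξ; α) ≤ 1. Consequently the unit hypercube B = {ξ ∈ ℝ^n : ‖ξ‖_∞ ≤ 1} is contained in the sublevel set O^bm(α) = {ξ ∈ ℝ^n : o^bm(ξ; α) ≤ 1}, i.e. the sets O^bm(α) are over-approximations of B. -/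
/-- Normalization constant `η_bm(α) = (exp α + exp (−α)) / (exp α − exp (−α))`. -/
noncomputable def etaBm (α : ℝ) : ℝ :=
  (Real.exp α + Real.exp (-α)) / (Real.exp α - Real.exp (-α))

/-- The Boltzmann obstacle function
`o^bm(ξ; α) = η_bm(α) * (∑ i, (ξ_i exp (α ξ_i) − ξ_i exp (−α ξ_i))) /
  (∑ i, (exp (α ξ_i) + exp (−α ξ_i)))`. -/
noncomputable def oBm (n : ℕ) (α : ℝ) (ξ : Fin n → ℝ) : ℝ :=
  etaBm α * (∑ i, (ξ i * Real.exp (α * ξ i) - ξ i * Real.exp (-(α * ξ i)))) /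
    (∑ i, (Real.exp (α * ξ i) + Real.exp (-(α * ξ i))))

lemma sinh_aux (α : ℝ) (hα : 0 < α) (x : ℝ) (hx : |x| ≤ 1) :
    Real.cosh α * (x * Real.sinh (α * x)) ≤ Real.sinh α * Real.cosh (α * x) := by
  have hx1 : x * Real.sinh (α * x) = |x| * Real.sinh (α * |x|) := by
    rcases abs_cases x with ⟨h, _⟩ | ⟨h, _⟩
    · rw [h]
    · rw [h, mul_neg, Real.sinh_neg]; ring
  have hcx : Real.cosh (α * x) = Real.cosh (α * |x|) := by
    rw [← Real.cosh_abs (α * x), abs_mul, abs_of_pos hα]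
  have h0 : 0 ≤ |x| := abs_nonneg x
  have hs : 0 ≤ Real.sinh (α * |x|) := Real.sinh_nonneg_iff.2 (by positivity)
  have h1 : |x| * Real.sinh (α * |x|) ≤ Real.sinh (α * |x|) := by nlinarith
  have h2 : Real.sinh (α * |x| - α) ≤ 0 :=
    Real.sinh_nonpos_iff.2 (by nlinarith)
  rw [Real.sinh_sub] at h2
  have hcp : 0 < Real.cosh α := Real.cosh_pos α
  rw [hx1, hcx]
  nlinarith [Real.cosh_pos (α * |x|)]

lemma key_aux (α : ℝ) (hα : 0 < α) (x : ℝ) (hx : |x| ≤ 1) :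
    (Real.exp α + Real.exp (-α)) * (x * Real.exp (α * x) - x * Real.exp (-(α * x)))
      ≤ (Real.exp α - Real.exp (-α)) * (Real.exp (α * x) + Real.exp (-(α * x))) := by
  have h := sinh_aux α hα x hx
  rw [Real.sinh_eq, Real.cosh_eq, Real.sinh_eq, Real.cosh_eq] at h
  nlinarith

/-- For every `n ≥ 1`, `α > 0` and every `ξ` with `‖ξ‖_∞ ≤ 1`, one has
`o^bm(ξ; α) ≤ 1`; consequently the unit hypercube `B = {ξ : ‖ξ‖_∞ ≤ 1}` is
contained in the sublevel set `O^bm(α) = {ξ : o^bm(ξ; α) ≤ 1}`. -/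
theorem oBm_overapprox (n : ℕ) (hn : 1 ≤ n) (α : ℝ) (hα : 0 < α) :
    (∀ ξ : Fin n → ℝ,
      Finset.univ.sup' ⟨⟨0, hn⟩, Finset.mem_univ _⟩ (fun i => |ξ i|) ≤ 1 →
        oBm n α ξ ≤ 1) ∧
    {ξ : Fin n → ℝ |
        Finset.univ.sup' ⟨⟨0, hn⟩, Finset.mem_univ _⟩ (fun i => |ξ i|) ≤ 1} ⊆
      {ξ : Fin n → ℝ | oBm n α ξ ≤ 1} := by
  have main : ∀ ξ : Fin n → ℝ,
      Finset.univ.sup' ⟨⟨0, hn⟩, Finset.mem_univ _⟩ (fun i => |ξ i|) ≤ 1 →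
        oBm n α ξ ≤ 1 := by
    intro ξ hξ
    have hbd : ∀ i, |ξ i| ≤ 1 := fun i =>
      le_trans (Finset.le_sup' (fun i => |ξ i|) (Finset.mem_univ i)) hξ
    have hD : 0 < ∑ i, (Real.exp (α * ξ i) + Real.exp (-(α * ξ i))) := by
      apply Finset.sum_pos (fun i _ => by positivity)
      exact ⟨⟨0, hn⟩, Finset.mem_univ _⟩
    rw [oBm, div_le_one hD, etaBm]
    have hden : 0 < Real.exp α - Real.exp (-α) := by
      have : Real.exp (-α) < Real.exp α := Real.exp_lt_exp.2 (by linarith)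
      linarith
    rw [div_mul_eq_mul_div, div_le_iff₀ hden, Finset.sum_mul, Finset.mul_sum]
    apply Finset.sum_le_sum
    intro i _
    have := key_aux α hα (ξ i) (hbd i)
    nlinarith
  exact ⟨main, fun ξ hξ => main ξ hξ⟩
end

section
/- For every integer n ≥ 1 and every ξ ∈ ℝ^n, the Boltzmann obstacle function converges to the supremum norm as the smoothing parameter tends to infinity: lim_{α → ∞} o^bm(ξ; α) = ‖ξ‖_∞ = max_i |ξ_i|. In particular, the sublevel sets O^bm(α) recover the unit hypercube in the limit α → ∞. -/
open Filter Real

/-- For every `n ≥ 1` and `ξ ∈ ℝ^n`, the Boltzmann obstacle function converges to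
the supremum norm as the smoothing parameter tends to infinity:
`lim_{α → ∞} o^bm(ξ; α) = ‖ξ‖_∞ = max_i |ξ_i|`. -/
theorem oBm_tendsto_supNorm (n : ℕ) (hn : 1 ≤ n) (ξ : Fin n → ℝ) :
    Filter.Tendsto (fun α : ℝ => oBm n α ξ) Filter.atTop
      (nhds (Finset.univ.sup' ⟨⟨0, hn⟩, Finset.mem_univ _⟩ (fun i => |ξ i|))) := by
  set M := Finset.univ.sup' ⟨⟨0, hn⟩, Finset.mem_univ _⟩ (fun i => |ξ i|) with hMdef
  have ha : ∀ i, |ξ i| ≤ M := fun i => Finset.le_sup' (fun j => |ξ j|) (Finset.mem_univ i)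
  have hM0 : 0 ≤ M := le_trans (abs_nonneg _) (ha ⟨0, hn⟩)
  have hexp : ∀ c : ℝ, c ≤ 0 →
      Tendsto (fun α : ℝ => Real.exp (α * c)) atTop (nhds (if c = 0 then 1 else 0)) := by
    intro c hc
    rcases hc.lt_or_eq with h | h
    · rw [if_neg h.ne]
      exact Real.tendsto_exp_atBot.comp (Filter.tendsto_id.atTop_mul_const_of_neg h)
    · subst h
      simp only [mul_zero, Real.exp_zero, if_pos rfl]
      exact tendsto_const_nhds
  set Li : Fin n → ℝ := fun i =>
    ξ i * (if ξ i - M = 0 then (1:ℝ) else 0) - ξ i * (if -(ξ i + M) = 0 then (1:ℝ) else 0)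
    with hLi
  set Ki : Fin n → ℝ := fun i =>
    (if ξ i - M = 0 then (1:ℝ) else 0) + (if -(ξ i + M) = 0 then (1:ℝ) else 0) with hKi
  have hle1 : ∀ i, ξ i - M ≤ 0 := fun i => by
    have h1 := ha i; have h2 := le_abs_self (ξ i); linarith
  have hle2 : ∀ i, -(ξ i + M) ≤ 0 := fun i => by
    have h1 := ha i; have h2 := neg_abs_le (ξ i); linarith
  have hnum : Tendsto (fun α : ℝ =>
      ∑ i, (ξ i * Real.exp (α * (ξ i - M)) - ξ i * Real.exp (α * (-(ξ i + M)))))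
      atTop (nhds (∑ i, Li i)) := by
    apply tendsto_finset_sum
    intro i _
    exact (tendsto_const_nhds.mul (hexp _ (hle1 i))).sub
      (tendsto_const_nhds.mul (hexp _ (hle2 i)))
  have hden : Tendsto (fun α : ℝ =>
      ∑ i, (Real.exp (α * (ξ i - M)) + Real.exp (α * (-(ξ i + M)))))
      atTop (nhds (∑ i, Ki i)) := by
    apply tendsto_finset_sum
    intro i _
    exact (hexp _ (hle1 i)).add (hexp _ (hle2 i))
  have hKnn : ∀ i, 0 ≤ Ki i := by
    intro i; simp only [hKi]; split_ifs <;> norm_num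
  have hKpos : 0 < ∑ i, Ki i := by
    obtain ⟨i0, -, hi0⟩ := Finset.exists_mem_eq_sup'
      (⟨⟨0, hn⟩, Finset.mem_univ _⟩ : (Finset.univ : Finset (Fin n)).Nonempty)
      (fun i => |ξ i|)
    refine Finset.sum_pos' (fun i _ => hKnn i) ⟨i0, Finset.mem_univ _, ?_⟩
    have h := (abs_eq hM0).mp hi0.symm
    simp only [hKi]
    split_ifs with h1 h2 h2
    · norm_num
    · norm_num
    · norm_num
    · rcases h with h | h
      · exact absurd (by linarith : ξ i0 - M = 0) h1
      · exact absurd (by linarith : -(ξ i0 + M) = 0) h2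
  have hLK : ∀ i, Li i = M * Ki i := by
    intro i
    simp only [hLi, hKi]
    split_ifs with h1 h2 h2 <;> ring_nf <;> try linarith
  have hexp2 : Tendsto (fun α : ℝ => Real.exp (α * (-2))) atTop (nhds 0) := by
    simpa using hexp (-2) (by norm_num)
  have heta : Tendsto (fun α : ℝ => etaBm α) atTop (nhds 1) := by
    have hid : ∀ α : ℝ,
        etaBm α = (1 + Real.exp (α * (-2))) / (1 - Real.exp (α * (-2))) := by
      intro α
      have h := mul_div_mul_left (1 + Real.exp (α * (-2))) (1 - Real.exp (α * (-2)))
        (Real.exp_ne_zero α)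
      rw [← h, etaBm]
      congr 1
      · rw [mul_add, mul_one, ← Real.exp_add]
        congr 2
        ring
      · rw [mul_sub, mul_one, ← Real.exp_add]
        congr 2
        ring
    have := Filter.Tendsto.div
      ((tendsto_const_nhds (x := (1:ℝ))).add hexp2)
      ((tendsto_const_nhds (x := (1:ℝ))).sub hexp2)
      (by norm_num : (1:ℝ) - 0 ≠ 0)
    simp only [add_zero, sub_zero, div_one] at this
    exact Tendsto.congr (fun α => (hid α).symm) this
  have key : ∀ α : ℝ, oBm n α ξ =
      etaBm α * (∑ i, (ξ i * Real.exp (α * (ξ i - M)) - ξ i * Real.exp (α * (-(ξ i + M))))) /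
        (∑ i, (Real.exp (α * (ξ i - M)) + Real.exp (α * (-(ξ i + M))))) := by
    intro α
    have hc : Real.exp (α * (-M)) ≠ 0 := Real.exp_ne_zero _
    rw [oBm, ← mul_div_mul_left
      (etaBm α * (∑ i, (ξ i * Real.exp (α * ξ i) - ξ i * Real.exp (-(α * ξ i)))))
      (∑ i, (Real.exp (α * ξ i) + Real.exp (-(α * ξ i)))) hc]
    congr 1
    · rw [mul_left_comm]
      congr 1
      rw [Finset.mul_sum]
      refine Finset.sum_congr rfl fun i _ => ?_
      rw [mul_sub, mul_left_comm, mul_left_comm (Real.exp (α * (-M))),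
        ← Real.exp_add, ← Real.exp_add]
      congr 3 <;> ring
    · rw [Finset.mul_sum]
      refine Finset.sum_congr rfl fun i _ => ?_
      rw [mul_add, ← Real.exp_add, ← Real.exp_add]
      congr 2 <;> ring
  have main := (heta.mul hnum).div hden (ne_of_gt hKpos)
  have hval : (1 * ∑ i, Li i) / ∑ i, Ki i = M := by
    rw [one_mul, Finset.sum_congr rfl (fun i _ => hLK i), ← Finset.mul_sum,
      mul_div_assoc, div_self (ne_of_gt hKpos), mul_one]
  rw [← hval]
  exact main.congr fun α => (key α).symm
end
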